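/- arXiv:1706.04095 — 3 statements merged into one kernel-verified Lean document; each statement's English description precedes it below -/
import Mathlib

section
/- Let P be a preorder with a superlinear family of translations Ω, let D be a category, and let F, G : P ⥤ D be functors. If F and G are Ω_ε-interleaved, then F and G are weakly ε-interleaved in the functor category D^P equipped with the flow −·Ω induced by Ω. Consequently the interleaving distance with respect to the induced flow satisfies d_(D^P, −·Ω)(F, G) ≤ d_Ω(F, G). -/
open CategoryTheory
open scoped NNReal ENNReal

universe v u

/-- A flow on a category `C`: a lax monoidal action of `([0,∞), ≤, +)` on `C`. -/
structure CatFlow (C : Type u) [Category.{v} C] where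
  /-- the `ε`-translation endofunctors -/
  T : ℝ≥0 → C ⥤ C
  /-- the natural transformations `T ε ⟶ T ζ` for `ε ≤ ζ` -/
  Tle : ∀ {ε ζ : ℝ≥0}, ε ≤ ζ → (T ε ⟶ T ζ)
  Tle_refl : ∀ ε : ℝ≥0, Tle (le_refl ε) = 𝟙 (T ε)
  Tle_trans : ∀ {ε ζ δ : ℝ≥0} (h₁ : ε ≤ ζ) (h₂ : ζ ≤ δ), Tle h₁ ≫ Tle h₂ = Tle (h₁.trans h₂)
  /-- the unit coherence natural transformation `𝟭 C ⟶ T 0` -/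
  u : 𝟭 C ⟶ T 0
  /-- the multiplication coherence transformations; note `(T ζ ⋙ T ε).obj a = (T ε).obj ((T ζ).obj a)`,
  which is the composite `T_ε ∘ T_ζ` of the paper. -/
  μ : ∀ ε ζ : ℝ≥0, T ζ ⋙ T ε ⟶ T (ε + ζ)
  unit_left : ∀ (ε : ℝ≥0) (a : C),
    u.app ((T ε).obj a) ≫ (μ 0 ε).app a = eqToHom (by simp)
  unit_right : ∀ (ε : ℝ≥0) (a : C),
    (T ε).map (u.app a) ≫ (μ ε 0).app a = eqToHom (by simp)
  assoc : ∀ (ε ζ δ : ℝ≥0) (a : C),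
    (μ ε ζ).app ((T δ).obj a) ≫ (μ (ε + ζ) δ).app a
      = (T ε).map ((μ ζ δ).app a) ≫ (μ ε (ζ + δ)).app a ≫ eqToHom (by rw [add_assoc])
  compat : ∀ {ε ζ δ κ : ℝ≥0} (h₁ : ε ≤ δ) (h₂ : ζ ≤ κ) (a : C),
    (μ ε ζ).app a ≫ (Tle (add_le_add h₁ h₂)).app a
      = (T ε).map ((Tle h₂).app a) ≫ (Tle h₁).app ((T κ).obj a) ≫ (μ δ κ).app a

/-- `(φ, ψ)` is a weak `ε`-interleaving of `a` and `b`. -/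
structure IsWeakInterleaving {C : Type u} [Category.{v} C] (F : CatFlow C) (ε : ℝ≥0)
    (a b : C) (φ : a ⟶ (F.T ε).obj b) (ψ : b ⟶ (F.T ε).obj a) : Prop where
  left : φ ≫ (F.T ε).map ψ ≫ (F.μ ε ε).app a
      = F.u.app a ≫ (F.Tle (zero_le : 0 ≤ ε + ε)).app a
  right : ψ ≫ (F.T ε).map φ ≫ (F.μ ε ε).app b
      = F.u.app b ≫ (F.Tle (zero_le : 0 ≤ ε + ε)).app b

/-- `a` and `b` are weakly `ε`-interleaved. -/
def WeaklyInterleaved {C : Type u} [Category.{v} C] (F : CatFlow C) (ε : ℝ≥0) (a b : C) : Prop :=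
  ∃ φ ψ, IsWeakInterleaving F ε a b φ ψ

/-- The interleaving distance associated to a flow. -/
noncomputable def interleavingDist {C : Type u} [Category.{v} C] (F : CatFlow C) (a b : C) :
    ℝ≥0∞ :=
  sInf { x : ℝ≥0∞ | ∃ ε : ℝ≥0, x = ε ∧ WeaklyInterleaved F ε a b }

/-- A superlinear family of translations on a preorder `P`. -/
structure SuperlinearFamily (P : Type u) [Preorder P] where
  /-- the underlying translation maps -/
  Ω : ℝ≥0 → P → P
  mono : ∀ ε : ℝ≥0, Monotone (Ω ε)
  le_self : ∀ (ε : ℝ≥0) (p : P), p ≤ Ω ε p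
  mono_eps : ∀ {ε ζ : ℝ≥0}, ε ≤ ζ → ∀ p : P, Ω ε p ≤ Ω ζ p
  superlinear : ∀ (ε ζ : ℝ≥0) (p : P), Ω ε (Ω ζ p) ≤ Ω (ε + ζ) p
universe v₂ u₂

section InducedFlow

variable {P : Type u} [Preorder P] {D : Type u₂} [Category.{v₂} D]

private lemma map_homOfLE_comp_eq_eqToHom (F : P ⥤ D) {p q r : P} (h₁ : p ≤ q) (h₂ : q ≤ r)
    (hpr : p = r) :
    F.map (homOfLE h₁) ≫ F.map (homOfLE h₂) = eqToHom (congrArg F.obj hpr) := by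
  subst hpr
  rw [← F.map_comp, show homOfLE h₁ ≫ homOfLE h₂ = 𝟙 p from Subsingleton.elim _ _,
    F.map_id, eqToHom_refl]

/-- The flow induced on a functor category `P ⥤ D` ("generalized persistence modules")
by a superlinear family of translations on the preorder `P`, given by precomposition. -/
def SuperlinearFamily.inducedFlow (S : SuperlinearFamily P) (D : Type u₂) [Category.{v₂} D] :
    CatFlow (P ⥤ D) where
  T ε := (Functor.whiskeringLeft P P D).obj (S.mono ε).functor
  Tle {ε ζ} h :=
    { app := fun F =>
        { app := fun p => F.map (homOfLE (S.mono_eps h p))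
          naturality := fun p q hpq => by
            dsimp
            erw [← F.map_comp, ← F.map_comp]
            exact congrArg F.map (Subsingleton.elim _ _) }
      naturality := fun F G α => by
        ext p
        exact (α.naturality _).symm }
  Tle_refl ε := by
    ext F p
    dsimp
    simp
  Tle_trans h₁ h₂ := by
    ext F p
    dsimp
    rw [← F.map_comp]
    exact congrArg F.map (Subsingleton.elim _ _)
  u :=
    { app := fun F =>
        { app := fun p => F.map (homOfLE (S.le_self 0 p))
          naturality := fun p q hpq => by
            dsimp
            erw [← F.map_comp, ← F.map_comp]
            exact congrArg F.map (Subsingleton.elim _ _) }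
      naturality := fun F G α => by
        ext p
        exact (α.naturality _).symm }
  μ ε ζ :=
    { app := fun F =>
        { app := fun p => F.map (homOfLE ((S.superlinear ζ ε p).trans
            (S.mono_eps (le_of_eq (add_comm ζ ε)) p)))
          naturality := fun p q hpq => by
            dsimp
            erw [← F.map_comp, ← F.map_comp]
            exact congrArg F.map (Subsingleton.elim _ _) }
      naturality := fun F G α => by
        ext p
        exact (α.naturality _).symm }
  unit_left ε F := by
    ext p
    simp only [NatTrans.comp_app, eqToHom_app]
    dsimp
    exact map_homOfLE_comp_eq_eqToHom F _ _ (by rw [zero_add])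
  unit_right ε F := by
    ext p
    simp only [NatTrans.comp_app, eqToHom_app]
    dsimp
    exact map_homOfLE_comp_eq_eqToHom F _ _ (by rw [add_zero])
  assoc ε ζ δ F := by
    ext p
    simp only [NatTrans.comp_app, eqToHom_app]
    dsimp
    rw [show (eqToHom (by rw [add_assoc]) :
        F.obj (S.Ω (ε + (ζ + δ)) p) ⟶ F.obj (S.Ω (ε + ζ + δ) p)) =
        F.map (eqToHom (by rw [add_assoc])) from (eqToHom_map F _).symm]
    erw [← F.map_comp, ← F.map_comp, ← F.map_comp]
    exact congrArg F.map (Subsingleton.elim _ _)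
  compat h₁ h₂ F := by
    ext p
    simp only [NatTrans.comp_app]
    dsimp
    erw [← F.map_comp, ← F.map_comp, ← F.map_comp]
    exact congrArg F.map (Subsingleton.elim _ _)

end InducedFlow

/-- An `Ω_ε`-interleaving of generalized persistence modules `F, G : P ⥤ D`
(Bubenik–de Silva–Scott style). -/
structure OmegaInterleaving {P : Type u} [Preorder P] {D : Type u₂} [Category.{v₂} D]
    (S : SuperlinearFamily P) (ε : ℝ≥0) (F G : P ⥤ D) where
  φ : F ⟶ (S.mono ε).functor ⋙ G
  ψ : G ⟶ (S.mono ε).functor ⋙ F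
  left : ∀ p : P, φ.app p ≫ ψ.app (S.Ω ε p)
      = F.map (homOfLE ((S.le_self ε p).trans (S.le_self ε (S.Ω ε p))))
  right : ∀ p : P, ψ.app p ≫ φ.app (S.Ω ε p)
      = G.map (homOfLE ((S.le_self ε p).trans (S.le_self ε (S.Ω ε p))))

/-- `F` and `G` are `Ω_ε`-interleaved. -/
def OmegaInterleaved {P : Type u} [Preorder P] {D : Type u₂} [Category.{v₂} D]
    (S : SuperlinearFamily P) (ε : ℝ≥0) (F G : P ⥤ D) : Prop :=
  Nonempty (OmegaInterleaving S ε F G)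

/-- The interleaving distance `d_Ω` of generalized persistence modules. -/
noncomputable def dOmega {P : Type u} [Preorder P] {D : Type u₂} [Category.{v₂} D]
    (S : SuperlinearFamily P) (F G : P ⥤ D) : ℝ≥0∞ :=
  sInf { x : ℝ≥0∞ | ∃ ε : ℝ≥0, x = ε ∧ OmegaInterleaved S ε F G }

/-!
Every structure map of the induced flow on `P ⥤ D` is a functor applied to an inequality of `P`.
The composite in a weak interleaving condition is therefore the composite in the corresponding
`Ω_ε`-interleaving condition followed by such a map, and since `P` is thin, both sides of the
condition are `F` applied to the unique arrow `p ⟶ Ω_{ε+ε} p`.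
-/

theorem CategoryTheory.Functor.map_homOfLE_comp_map_homOfLE {P : Type u} [Preorder P]
    {D : Type u₂} [Category.{v₂} D] (F : P ⥤ D) {p q r : P} (h₁ : p ≤ q) (h₂ : q ≤ r) :
    F.map (homOfLE h₁) ≫ F.map (homOfLE h₂) = F.map (homOfLE (h₁.trans h₂)) := by
  rw [← F.map_comp, homOfLE_comp]

namespace OmegaInterleaving

variable {P : Type u} [Preorder P] {D : Type u₂} [Category.{v₂} D] {S : SuperlinearFamily P}
  {ε : ℝ≥0} {F G : P ⥤ D}

def symm (I : OmegaInterleaving S ε F G) : OmegaInterleaving S ε G F where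
  φ := I.ψ
  ψ := I.φ
  left := I.right
  right := I.left

lemma isWeakInterleaving_left (I : OmegaInterleaving S ε F G) :
    I.φ ≫ ((S.inducedFlow D).T ε).map I.ψ ≫ ((S.inducedFlow D).μ ε ε).app F
      = (S.inducedFlow D).u.app F ≫ ((S.inducedFlow D).Tle (zero_le : 0 ≤ ε + ε)).app F := by
  ext p
  change I.φ.app p ≫ I.ψ.app (S.Ω ε p) ≫ F.map _ = F.map _ ≫ F.map _
  erw [← Category.assoc, I.left p, F.map_homOfLE_comp_map_homOfLE, F.map_homOfLE_comp_map_homOfLE]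

theorem isWeakInterleaving (I : OmegaInterleaving S ε F G) :
    IsWeakInterleaving (S.inducedFlow D) ε F G I.φ I.ψ :=
  ⟨I.isWeakInterleaving_left, I.symm.isWeakInterleaving_left⟩

end OmegaInterleaving

/-- If `F, G : P ⥤ D` are `Ω_ε`-interleaved then they are weakly `ε`-interleaved for the
flow induced on `D^P` by `Ω`; hence the weak interleaving distance is bounded by `d_Ω`. -/
theorem omegaInterleaved_implies_weaklyInterleaved {P : Type u} [Preorder P]
    {D : Type u₂} [Category.{v₂} D] (S : SuperlinearFamily P) (F G : P ⥤ D) :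
    (∀ ε : ℝ≥0, OmegaInterleaved S ε F G → WeaklyInterleaved (S.inducedFlow D) ε F G) ∧
    interleavingDist (S.inducedFlow D) F G ≤ dOmega S F G := by
  have weakly : ∀ ε : ℝ≥0, OmegaInterleaved S ε F G →
      WeaklyInterleaved (S.inducedFlow D) ε F G :=
    fun ε ⟨I⟩ => ⟨I.φ, I.ψ, I.isWeakInterleaving⟩
  refine ⟨weakly, sInf_le_sInf ?_⟩
  rintro x ⟨ε, rfl, h⟩
  exact ⟨ε, rfl, weakly ε h⟩
end

section
/- Let (M,d) be a metric space, X and Y topological spaces, f : X → M and g : Y → M continuous, and ε ≥ 0. Consider the preorder of all subsets of M ordered by inclusion, with the superlinear family Ω_ε(U) = closed ε-thickening of U (the set of points of M whose infimum extended distance to U is at most ε), and the level set filtration functors L_f : U ↦ f⁻¹(U) (subspace topology, inclusion maps) and L_g : U ↦ g⁻¹(U). Suppose Φ : X → Y is a homeomorphism with d(f(x), g(Φ(x))) ≤ ε for all x ∈ X. Then L_f and L_g are Ω_ε-interleaved: Φ restricts to a continuous map f⁻¹(U) → g⁻¹(Ω_ε(U)) for every subset U, Φ⁻¹ restricts to a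 continuous map g⁻¹(U) → f⁻¹(Ω_ε(U)), these restrictions are natural in U, and their composites equal the inclusions f⁻¹(U) ⊆ f⁻¹(Ω_ε(Ω_ε(U))) and g⁻¹(U) ⊆ g⁻¹(Ω_ε(Ω_ε(U))). -/
open CategoryTheory
open scoped NNReal ENNReal

universe v u

universe v₂ u₂

/-- The closed-thickening superlinear family `U ↦ {m : infEdist m U ≤ ε}` on the poset of
subsets of a metric space `M` ordered by inclusion. -/
noncomputable def thickeningFamily (M : Type) [MetricSpace M] :
    SuperlinearFamily (Set M) where
  Ω ε U := Metric.cthickening (ε : ℝ) U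
  mono ε U V h := Metric.cthickening_subset_of_subset _ h
  le_self ε U := Metric.self_subset_cthickening U
  mono_eps h U := Metric.cthickening_mono (NNReal.coe_le_coe.2 h) U
  superlinear ε ζ U := by
    try dsimp only
    rw [NNReal.coe_add]
    exact Metric.cthickening_cthickening_subset ε.2 ζ.2 U

/-- The level set filtration of `f : X → M`, a functor from the poset of subsets of `M`
(ordered by inclusion) to `Top`, `U ↦ f ⁻¹' U`. -/
def levelFiltration {X : Type} [TopologicalSpace X] {M : Type} [MetricSpace M]
    (f : X → M) : Set M ⥤ TopCat where
  obj U := TopCat.of (f ⁻¹' U)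
  map {U V} h :=
    TopCat.ofHom ⟨Set.inclusion (Set.preimage_mono (leOfHom h)), continuous_inclusion _⟩

section LevelFiltration

variable {M : Type} [MetricSpace M] {X Y : Type} [TopologicalSpace X] [TopologicalSpace Y]

/-- A continuous `φ` with `g ∘ φ` uniformly `ε`-close to `f` maps `f ⁻¹' U` into
`g ⁻¹' cthickening ε U`, naturally in `U`. -/
noncomputable def levelFiltrationShift (f : X → M) (g : Y → M) (ε : ℝ≥0) (φ : C(X, Y))
    (hφ : ∀ x, dist (f x) (g (φ x)) ≤ ε) :
    levelFiltration f ⟶ ((thickeningFamily M).mono ε).functor ⋙ levelFiltration g where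
  app U := TopCat.ofHom
    ⟨fun x => ⟨φ x.1, Metric.mem_cthickening_of_dist_le _ _ _ _ x.2
        ((dist_comm _ _).trans_le (hφ x.1))⟩,
      (φ.continuous.comp continuous_subtype_val).subtype_mk _⟩

theorem levelFiltrationShift_app_comp_of_leftInverse (f : X → M) (g : Y → M) (ε : ℝ≥0)
    (φ : C(X, Y)) (ψ : C(Y, X)) (hφ : ∀ x, dist (f x) (g (φ x)) ≤ ε)
    (hψ : ∀ y, dist (g y) (f (ψ y)) ≤ ε) (hψφ : Function.LeftInverse ψ φ) (U : Set M) :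
    (levelFiltrationShift f g ε φ hφ).app U ≫
        (levelFiltrationShift g f ε ψ hψ).app ((thickeningFamily M).Ω ε U) =
      (levelFiltration f).map (homOfLE (((thickeningFamily M).le_self ε U).trans
        ((thickeningFamily M).le_self ε ((thickeningFamily M).Ω ε U)))) := by
  ext x
  exact Subtype.ext (hψφ x.1)

noncomputable def levelFiltrationInterleaving (f : X → M) (g : Y → M) (ε : ℝ≥0)
    (Φ : X ≃ₜ Y) (hΦ : ∀ x, dist (f x) (g (Φ x)) ≤ ε) :
    OmegaInterleaving (thickeningFamily M) ε (levelFiltration f) (levelFiltration g) :=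
  have hΦ_symm : ∀ y, dist (g y) (f (Φ.symm y)) ≤ ε := fun y => by
    simpa [dist_comm] using hΦ (Φ.symm y)
  { φ := levelFiltrationShift f g ε Φ hΦ
    ψ := levelFiltrationShift g f ε Φ.symm hΦ_symm
    left := levelFiltrationShift_app_comp_of_leftInverse f g ε Φ Φ.symm hΦ hΦ_symm
      Φ.symm_apply_apply
    right := levelFiltrationShift_app_comp_of_leftInverse g f ε Φ.symm Φ hΦ_symm hΦ
      Φ.apply_symm_apply }

end LevelFiltration

theorem level_filtration_interleaved_general {M : Type} [MetricSpace M] {X Y : Type}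
    [TopologicalSpace X] [TopologicalSpace Y] (f : X → M) (g : Y → M)
    (ε : ℝ≥0) (Φ : X ≃ₜ Y)
    (hΦ : ∀ x : X, dist (f x) (g (Φ x)) ≤ ε) :
    ∃ I : OmegaInterleaving (thickeningFamily M) ε (levelFiltration f) (levelFiltration g),
      (∀ (U : Set M) (x : f ⁻¹' U),
        ((I.φ.app U) x : g ⁻¹' Metric.cthickening (ε : ℝ) U).1 = Φ x.1) ∧
      (∀ (U : Set M) (y : g ⁻¹' U),
        ((I.ψ.app U) y : f ⁻¹' Metric.cthickening (ε : ℝ) U).1 = Φ.symm y.1) :=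
  ⟨levelFiltrationInterleaving f g ε Φ hΦ, fun _ _ => rfl, fun _ _ => rfl⟩

/-- If `Φ : X ≃ₜ Y` is a homeomorphism with `d (f x) (g (Φ x)) ≤ ε` everywhere, then the
level set filtrations of `f` and `g` are `Ω_ε`-interleaved for the closed-thickening
family on subsets of `M`, via the restrictions of `Φ` and of `Φ⁻¹` (which are natural in
`U` and whose composites are the inclusions). -/
theorem level_filtration_interleaved {M : Type} [MetricSpace M] {X Y : Type}
    [TopologicalSpace X] [TopologicalSpace Y] (f : X → M) (g : Y → M)
    (hf : Continuous f) (hg : Continuous g) (ε : ℝ≥0) (Φ : X ≃ₜ Y)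
    (hΦ : ∀ x : X, dist (f x) (g (Φ x)) ≤ ε) :
    ∃ I : OmegaInterleaving (thickeningFamily M) ε (levelFiltration f) (levelFiltration g),
      (∀ (U : Set M) (x : f ⁻¹' U),
        ((I.φ.app U) x : g ⁻¹' Metric.cthickening (ε : ℝ) U).1 = Φ x.1) ∧
      (∀ (U : Set M) (y : g ⁻¹' U),
        ((I.ψ.app U) y : f ⁻¹' Metric.cthickening (ε : ℝ) U).1 = Φ.symm y.1) :=
  level_filtration_interleaved_general f g ε Φ hΦ
end

section
/- Let X and Y be topological spaces, f : X → ℝ and g : Y → ℝ continuous, ε ≥ 0, and suppose Φ : X → Y is a homeomorphism with |f(x) − g(Φ(x))| ≤ ε for all x ∈ X. Let S_f, S_g : (ℝ,≤) ⥤ Top be the sublevel set filtrations a ↦ f⁻¹((−∞,a]) and a ↦ g⁻¹((−∞,a]), and let H : Top ⥤ D be any functor into any category D (for example a homology functor into vector spaces). Then the composite functors H∘S_f and H∘S_g : (ℝ,≤) ⥤ D are Ω_ε-interleaved for the superlinear family Ω_ε(a) = a + ε on (ℝ,≤). Consequently d_Ω(H∘S_f, H∘S_g) ≤ sup_{x∈X}|f(x)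 − g(Φ(x))| whenever such a homeomorphism exists (soft stability of sublevel set persistence). -/
open CategoryTheory
open scoped NNReal ENNReal

universe v u

universe v₂ u₂

/-- The shift superlinear family `a ↦ a + ε` on `(ℝ, ≤)`. -/
noncomputable def shiftFamily : SuperlinearFamily ℝ where
  Ω ε a := a + ε
  mono ε a b h := by dsimp; linarith
  le_self ε p := le_add_of_nonneg_right ε.2
  mono_eps h p := add_le_add_right (NNReal.coe_le_coe.2 h) p
  superlinear ε ζ p := by push_cast; linarith

/-- The sublevel set filtration of `f : X → ℝ`, as a functor `(ℝ, ≤) ⥤ Top`. -/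
def sublevelFiltration {X : Type} [TopologicalSpace X] (f : X → ℝ) : ℝ ⥤ TopCat where
  obj a := TopCat.of (f ⁻¹' Set.Iic a)
  map {a b} h :=
    TopCat.ofHom ⟨Set.inclusion (fun x hx => le_trans hx (leOfHom h)),
      continuous_inclusion _⟩

/-
A homeomorphism `Φ` moving `f` by at most `ε` maps the sublevel set `f ≤ a` into `g ≤ a + ε`,
and `Φ⁻¹` maps `g ≤ a` into `f ≤ a + ε`. These inclusions are natural in `a`, and their
composites are the identity on points, i.e. the structure maps of the filtrations: so `S_f` and
`S_g` are already `Ω_ε`-interleaved as functors to `Top`, and applying any functor `H`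
preserves interleavings. The distance bound is this interleaving at `ε = sup |f - g ∘ Φ|`,
which is finite since it is at most the given `ε`.
-/

section OmegaInterleaving

variable {P : Type u} [Preorder P] {D : Type u₂} [Category.{v₂} D] {E : Type*} [Category E]
  {S : SuperlinearFamily P} {ε : ℝ≥0} {F G : P ⥤ D}

def OmegaInterleaving.whiskerRight (I : OmegaInterleaving S ε F G) (H : D ⥤ E) :
    OmegaInterleaving S ε (F ⋙ H) (G ⋙ H) where
  φ := Functor.whiskerRight I.φ H
  ψ := Functor.whiskerRight I.ψ H
  left p := (H.map_comp _ _).symm.trans (congrArg H.map (I.left p))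
  right p := (H.map_comp _ _).symm.trans (congrArg H.map (I.right p))

theorem dOmega_le_of_omegaInterleaved (h : OmegaInterleaved S ε F G) : dOmega S F G ≤ ε :=
  sInf_le ⟨ε, rfl, h⟩

end OmegaInterleaving

section Sublevel

variable {X Y : Type} [TopologicalSpace X] [TopologicalSpace Y] {f : X → ℝ} {g : Y → ℝ}
  {ε : ℝ≥0}

def sublevelShift (Φ : C(X, Y)) (hΦ : ∀ x, g (Φ x) ≤ f x + ε) :
    sublevelFiltration f ⟶ (shiftFamily.mono ε).functor ⋙ sublevelFiltration g where
  app a :=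
    have hmaps : Set.MapsTo Φ (f ⁻¹' Set.Iic a) (g ⁻¹' Set.Iic (a + ε)) := fun x (hx : f x ≤ a) =>
      show g (Φ x) ≤ a + ε by linarith [hΦ x]
    TopCat.ofHom ⟨hmaps.restrict, Φ.continuous.restrict hmaps⟩
  naturality _ _ _ := rfl

theorem Homeomorph.le_add_of_abs_sub_le (Φ : X ≃ₜ Y) (hΦ : ∀ x, |f x - g (Φ x)| ≤ ε) :
    (∀ x, g (Φ x) ≤ f x + ε) ∧ ∀ y, f (Φ.symm y) ≤ g y + ε := by
  refine ⟨fun x => ?_, fun y => ?_⟩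
  · linarith [(abs_le.1 (hΦ x)).1]
  · have := (abs_le.1 (hΦ (Φ.symm y))).2
    rw [Φ.apply_symm_apply] at this
    linarith

def sublevelInterleaving (Φ : X ≃ₜ Y) (hΦ : ∀ x, |f x - g (Φ x)| ≤ ε) :
    OmegaInterleaving shiftFamily ε (sublevelFiltration f) (sublevelFiltration g) where
  φ := sublevelShift Φ (Φ.le_add_of_abs_sub_le hΦ).1
  ψ := sublevelShift Φ.symm (Φ.le_add_of_abs_sub_le hΦ).2
  left _ := by ext x; exact Subtype.ext (Φ.symm_apply_apply x.1)
  right _ := by ext y; exact Subtype.ext (Φ.apply_symm_apply y.1)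

end Sublevel

theorem sublevel_persistence_soft_stability_general {X Y : Type} [TopologicalSpace X]
    [TopologicalSpace Y] (f : X → ℝ) (g : Y → ℝ)
    {D : Type u₂} [Category.{v₂} D] (H : TopCat ⥤ D)
    (ε : ℝ≥0) (Φ : X ≃ₜ Y) (hΦ : ∀ x : X, |f x - g (Φ x)| ≤ ε) :
    OmegaInterleaved shiftFamily ε (sublevelFiltration f ⋙ H) (sublevelFiltration g ⋙ H) ∧
    dOmega shiftFamily (sublevelFiltration f ⋙ H) (sublevelFiltration g ⋙ H) ≤
      ⨆ x : X, ENNReal.ofReal |f x - g (Φ x)| := by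
  have interleaved (δ : ℝ≥0) (hδ : ∀ x, |f x - g (Φ x)| ≤ δ) :
      OmegaInterleaved shiftFamily δ (sublevelFiltration f ⋙ H) (sublevelFiltration g ⋙ H) :=
    ⟨(sublevelInterleaving Φ hδ).whiskerRight H⟩
  refine ⟨interleaved ε hΦ, ?_⟩
  set s := ⨆ x : X, ENNReal.ofReal |f x - g (Φ x)|
  have hs : s ≠ ⊤ := ne_top_of_le_ne_top ENNReal.coe_ne_top <|
    iSup_le fun x => ENNReal.ofReal_le_of_le_toReal (by simpa using hΦ x)
  have hsup (x : X) : |f x - g (Φ x)| ≤ s.toNNReal :=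
    (ENNReal.ofReal_le_iff_le_toReal hs).1 (le_iSup (fun x => ENNReal.ofReal |f x - g (Φ x)|) x)
  calc dOmega shiftFamily (sublevelFiltration f ⋙ H) (sublevelFiltration g ⋙ H)
      ≤ s.toNNReal := dOmega_le_of_omegaInterleaved (interleaved _ hsup)
    _ = s := ENNReal.coe_toNNReal hs

/-- Soft stability of sublevel set persistence: if `Φ : X ≃ₜ Y` satisfies
`|f x - g (Φ x)| ≤ ε` everywhere, then for any functor `H : Top ⥤ D` (e.g. homology),
the composites `H ∘ S_f` and `H ∘ S_g` are `Ω_ε`-interleaved, and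
`d_Ω(H∘S_f, H∘S_g) ≤ sup_x |f x - g (Φ x)|`. -/
theorem sublevel_persistence_soft_stability {X Y : Type} [TopologicalSpace X]
    [TopologicalSpace Y] (f : X → ℝ) (g : Y → ℝ) (hf : Continuous f) (hg : Continuous g)
    {D : Type u₂} [Category.{v₂} D] (H : TopCat ⥤ D)
    (ε : ℝ≥0) (Φ : X ≃ₜ Y) (hΦ : ∀ x : X, |f x - g (Φ x)| ≤ ε) :
    OmegaInterleaved shiftFamily ε (sublevelFiltration f ⋙ H) (sublevelFiltration g ⋙ H) ∧
    dOmega shiftFamily (sublevelFiltration f ⋙ H) (sublevelFiltration g ⋙ H) ≤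
      ⨆ x : X, ENNReal.ofReal |f x - g (Φ x)| :=
  sublevel_persistence_soft_stability_general f g H ε Φ hΦ
end
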